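/- arXiv:1212.3815 — 3 statements merged into one kernel-verified Lean document; each statement's English description precedes it below -/
import Mathlib

section
/- Let Γ be a finite simple connected graph, C ⊆ V nonempty, and let μ₀ > μ₁ > … > μ_{d_C} be the eigenvalues of Γ with nonzero C-multiplicity. Then the eccentricity of C satisfies ε_C ≤ d_C, where ε_C = max_{i∈V} dist(i, C). -/
/-!
If `dist(i, C) = k`, then `(Aᵐ ρC)ᵢ` vanishes for `m < k` and is positive for `m = k`: the entry
`(Aᵐ)ᵢⱼ` counts walks of length `m` and `ν > 0`. On the other hand `ρC` is the sum of its
projections onto the eigenspaces of `A`, so `p(A) ρC = 0` for the monic polynomial `p` whose roots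
are the eigenvalues with nonzero projection. If `ε_C ≥ deg p`, connectivity gives a vertex `i`
with `dist(i, C) = deg p`, and the `i`-th coordinate of `p(A) ρC` is then `(A^(deg p) ρC)ᵢ > 0`.
-/

open Finset Polynomial BigOperators
open scoped Classical

noncomputable section

/-- The eigenspace of a real matrix `A` (viewed as an operator on Euclidean space)
for the value `μ`. -/
def eigSp {n : ℕ} (A : Matrix (Fin n) (Fin n) ℝ) (μ : ℝ) :
    Submodule ℝ (EuclideanSpace ℝ (Fin n)) :=
  Module.End.eigenspace (Matrix.toEuclideanLin A) μ

/-- Orthogonal projection onto the `μ`-eigenspace of `A`. -/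
def eigProj {n : ℕ} (A : Matrix (Fin n) (Fin n) ℝ) (μ : ℝ) (v : EuclideanSpace ℝ (Fin n)) :
    EuclideanSpace ℝ (Fin n) :=
  (Submodule.orthogonalProjectionOnto (eigSp A μ) v : EuclideanSpace ℝ (Fin n))

/-- The weighted characteristic vector `ρS = Σ_{i∈S} ν_i e_i`. -/
def rho {n : ℕ} (ν : EuclideanSpace ℝ (Fin n)) (S : Finset (Fin n)) :
    EuclideanSpace ℝ (Fin n) :=
  WithLp.toLp 2 (fun i => if i ∈ S then ν i else 0)

/-- The unit vector `e_S = ρS / ‖ρS‖`. -/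
def unitVec {n : ℕ} (ν : EuclideanSpace ℝ (Fin n)) (S : Finset (Fin n)) :
    EuclideanSpace ℝ (Fin n) :=
  (‖rho ν S‖)⁻¹ • rho ν S

/-- The `S`-local multiplicity of `μ`: `m_S(μ) = ‖E_μ e_S‖²`. -/
def mloc {n : ℕ} (A : Matrix (Fin n) (Fin n) ℝ) (ν : EuclideanSpace ℝ (Fin n))
    (S : Finset (Fin n)) (μ : ℝ) : ℝ :=
  ‖eigProj A μ (unitVec ν S)‖ ^ 2

/-- The `S`-local spectrum: the set of `μ` whose eigenspace sees `ρS`. -/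
def evloc {n : ℕ} (A : Matrix (Fin n) (Fin n) ℝ) (ν : EuclideanSpace ℝ (Fin n))
    (S : Finset (Fin n)) : Set ℝ :=
  {μ | eigProj A μ (rho ν S) ≠ 0}

/-- Distance from a vertex `i` to a set of vertices `S`. -/
def dSet {n : ℕ} (G : SimpleGraph (Fin n)) (S : Finset (Fin n)) (i : Fin n) : ℕ :=
  sInf {k | ∃ j ∈ S, G.dist i j = k}

/-- Eccentricity (covering radius) of a vertex set `S`. -/
def eccS {n : ℕ} (G : SimpleGraph (Fin n)) (S : Finset (Fin n)) : ℕ :=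
  Finset.univ.sup (dSet G S)

/-- The `k`-th subconstituent `S_k = {i : dist(i,S) = k}`. -/
def subcons {n : ℕ} (G : SimpleGraph (Fin n)) (S : Finset (Fin n)) (k : ℕ) :
    Finset (Fin n) :=
  Finset.univ.filter (fun i => dSet G S i = k)

/-- `p(A)·v` for a polynomial `p`, a matrix `A` and a Euclidean vector `v`. -/
def aevalVec {n : ℕ} (A : Matrix (Fin n) (Fin n) ℝ) (p : Polynomial ℝ)
    (v : EuclideanSpace ℝ (Fin n)) : EuclideanSpace ℝ (Fin n) :=
  WithLp.toLp 2 ((Polynomial.aeval A p).mulVec v)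

/-- Moment-like parameter `π_l = ∏_{h≠l} |μ_l − μ_h|` for an enumeration `μ`. -/
def piC {d : ℕ} (μ : Fin (d + 1) → ℝ) (l : Fin (d + 1)) : ℝ :=
  ∏ h ∈ Finset.univ.erase l, |μ l - μ h|

section Spectral

variable {𝕜 E : Type*} [RCLike 𝕜] [NormedAddCommGroup E] [InnerProductSpace 𝕜 E]
  [FiniteDimensional 𝕜 E]

open Module.End

theorem LinearMap.IsSymmetric.sum_starProjection_eigenspace {T : E →ₗ[𝕜] E}
    (hT : T.IsSymmetric) (x : E) :
    ∑ μ : Eigenvalues T, (eigenspace T μ).starProjection x = x :=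
  hT.orthogonalFamily_eigenspaces'.sum_projection_of_mem_iSup x <| by
    rw [Submodule.orthogonal_eq_bot_iff.mp hT.orthogonalComplement_iSup_eigenspaces_eq_bot']
    exact Submodule.mem_top

theorem LinearMap.IsSymmetric.aeval_apply_eq_zero_of_eval_eq_zero {T : E →ₗ[𝕜] E}
    (hT : T.IsSymmetric) {x : E} {p : 𝕜[X]}
    (hp : ∀ μ, (eigenspace T μ).starProjection x ≠ 0 → p.eval μ = 0) :
    aeval T p x = 0 := by
  rw [← hT.sum_starProjection_eigenspace x, map_sum]
  refine Finset.sum_eq_zero fun μ _ => ?_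
  have hμ := mem_eigenspace_iff.mp ((eigenspace T μ).starProjection_apply_mem x)
  rw [aeval_apply_of_mem_apply_eq_smul hμ]
  by_cases h : (eigenspace T μ).starProjection x = 0
  · rw [h, smul_zero]
  · rw [hp μ h, zero_smul]

theorem Module.End.finite_setOf_starProjection_eigenspace_ne_zero (T : E →ₗ[𝕜] E)
    (x : E) : {μ | (eigenspace T μ).starProjection x ≠ 0}.Finite :=
  (finite_hasEigenvalue T).subset fun _ h =>
    hasEigenvalue_of_hasEigenvector ⟨(eigenspace T _).starProjection_apply_mem x, h⟩

end Spectral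

theorem LinearMap.map_aeval_apply_eq_leadingCoeff_smul {R M N : Type*} [CommRing R]
    [AddCommGroup M] [Module R M] [AddCommGroup N] [Module R N] (T : Module.End R M)
    (φ : M →ₗ[R] N) (x : M) (p : R[X]) (h : ∀ m < p.natDegree, φ ((T ^ m) x) = 0) :
    φ (aeval T p x) = p.leadingCoeff • φ ((T ^ p.natDegree) x) := by
  rw [aeval_eq_sum_range, LinearMap.sum_apply, map_sum, Finset.sum_range_succ,
    Finset.sum_eq_zero fun m hm => ?_, zero_add]
  · simp
  · simp [h m (Finset.mem_range.mp hm)]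

theorem Matrix.toEuclideanLin_pow_apply_rho {n : ℕ} (A : Matrix (Fin n) (Fin n) ℝ)
    (ν : EuclideanSpace ℝ (Fin n)) (S : Finset (Fin n)) (m : ℕ) (i : Fin n) :
    ((Matrix.toEuclideanLin A ^ m) (rho ν S)) i = ∑ j ∈ S, (A ^ m) i j * ν j := by
  rw [← Matrix.toLpLin_pow, Matrix.toLpLin_apply]
  simp [rho, Matrix.mulVec, dotProduct, Finset.sum_ite_mem]

namespace SimpleGraph

section AdjMatrix

variable {V α : Type*} [Fintype V] [DecidableEq V] (G : SimpleGraph V) [DecidableRel G.Adj]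

theorem adjMatrix_pow_apply_eq_zero_of_lt_dist [Semiring α] {m : ℕ} {i j : V}
    (h : m < G.dist i j) : (G.adjMatrix α ^ m) i j = 0 := by
  rw [adjMatrix_pow_apply_eq_card_walk, Fintype.card_eq_zero_iff.mpr, Nat.cast_zero]
  exact ⟨fun ⟨p, hp⟩ => (hp ▸ G.dist_le p).not_gt h⟩

theorem adjMatrix_pow_apply_nonneg [Semiring α] [PartialOrder α] [IsOrderedRing α] (m : ℕ)
    (i j : V) : 0 ≤ (G.adjMatrix α ^ m) i j := by
  rw [adjMatrix_pow_apply_eq_card_walk]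
  exact Nat.cast_nonneg _

variable {G} in
theorem Reachable.adjMatrix_pow_dist_apply_pos [Semiring α] [PartialOrder α] [IsOrderedRing α]
    [Nontrivial α] {i j : V} (h : G.Reachable i j) :
    0 < (G.adjMatrix α ^ G.dist i j) i j := by
  rw [adjMatrix_pow_apply_eq_card_walk, Nat.cast_pos, Fintype.card_pos_iff]
  obtain ⟨p, hp⟩ := h.exists_walk_length_eq_dist
  exact ⟨⟨p, hp⟩⟩

end AdjMatrix

section DistToSet

variable {n : ℕ} {G : SimpleGraph (Fin n)} {S : Finset (Fin n)}

theorem dSet_le_dist {i j : Fin n} (hj : j ∈ S) : dSet G S i ≤ G.dist i j :=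
  Nat.sInf_le ⟨j, hj, rfl⟩

theorem exists_dist_eq_dSet (hS : S.Nonempty) (i : Fin n) : ∃ j ∈ S, G.dist i j = dSet G S i :=
  have ⟨j, hj⟩ := hS
  Nat.sInf_mem (s := {k | ∃ j ∈ S, G.dist i j = k}) ⟨_, j, hj, rfl⟩

theorem Connected.dSet_le_dSet_add_one (hG : G.Connected) {i i' : Fin n} (hS : S.Nonempty)
    (hadj : G.Adj i i') : dSet G S i ≤ dSet G S i' + 1 := by
  obtain ⟨j, hj, hdist⟩ := exists_dist_eq_dSet (G := G) hS i'
  calc dSet G S i ≤ G.dist i j := dSet_le_dist hj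
    _ ≤ G.dist i i' + G.dist i' j := hG.dist_triangle
    _ = dSet G S i' + 1 := by rw [dist_eq_one_iff_adj.mpr hadj, hdist, add_comm]

theorem Connected.exists_dSet_eq_of_dSet_eq_succ (hG : G.Connected) (hS : S.Nonempty) {i : Fin n}
    {k : ℕ} (h : dSet G S i = k + 1) : ∃ i', dSet G S i' = k := by
  obtain ⟨j, hj, hdist⟩ := exists_dist_eq_dSet (G := G) hS i
  obtain ⟨p, hp⟩ := (hG i j).exists_walk_length_eq_dist
  cases p with
  | nil => simp_all
  | @cons _ i' _ hadj q =>
    refine ⟨i', le_antisymm ?_ ?_⟩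
    · calc dSet G S i' ≤ G.dist i' j := dSet_le_dist hj
        _ ≤ q.length := G.dist_le q
        _ = k := by simp_all
    · have := hG.dSet_le_dSet_add_one hS hadj
      omega

theorem Connected.exists_dSet_eq_of_le (hG : G.Connected) (hS : S.Nonempty) {i : Fin n} {k : ℕ}
    (h : k ≤ dSet G S i) : ∃ i', dSet G S i' = k := by
  induction h using Nat.decreasingInduction with
  | self => exact ⟨i, rfl⟩
  | of_succ m _ ih =>
    obtain ⟨i', hi'⟩ := ih
    exact hG.exists_dSet_eq_of_dSet_eq_succ hS hi'

theorem Connected.exists_dSet_eq_of_le_eccS (hG : G.Connected) (hS : S.Nonempty) {k : ℕ}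
    (h : k ≤ eccS G S) : ∃ i, dSet G S i = k := by
  obtain ⟨i, -, hi⟩ := Finset.exists_mem_eq_sup Finset.univ
    (hS.mono (Finset.subset_univ S)) (dSet G S)
  exact hG.exists_dSet_eq_of_le hS (hi ▸ h : k ≤ dSet G S i)

theorem adjMatrix_pow_apply_rho_eq_zero [DecidableRel G.Adj] {ν : EuclideanSpace ℝ (Fin n)}
    {m : ℕ} {i : Fin n} (h : m < dSet G S i) :
    ((Matrix.toEuclideanLin (G.adjMatrix ℝ) ^ m) (rho ν S)) i = 0 := by
  rw [Matrix.toEuclideanLin_pow_apply_rho]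
  exact Finset.sum_eq_zero fun j hj => by
    rw [G.adjMatrix_pow_apply_eq_zero_of_lt_dist (h.trans_le (dSet_le_dist hj)), zero_mul]

theorem Connected.adjMatrix_pow_dSet_apply_rho_pos [DecidableRel G.Adj] (hG : G.Connected)
    (hS : S.Nonempty) {ν : EuclideanSpace ℝ (Fin n)} (hν : ∀ i, 0 < ν i) (i : Fin n) :
    0 < ((Matrix.toEuclideanLin (G.adjMatrix ℝ) ^ dSet G S i) (rho ν S)) i := by
  obtain ⟨j, hj, hdist⟩ := exists_dist_eq_dSet (G := G) hS i
  rw [Matrix.toEuclideanLin_pow_apply_rho]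
  refine Finset.sum_pos' (fun k _ => mul_nonneg (G.adjMatrix_pow_apply_nonneg _ _ _) (hν k).le)
    ⟨j, hj, mul_pos ?_ (hν j)⟩
  exact hdist ▸ (hG i j).adjMatrix_pow_dist_apply_pos

end DistToSet

end SimpleGraph

theorem eccentricity_le_dual_degree_general {n : ℕ} (G : SimpleGraph (Fin n)) [DecidableRel G.Adj]
    (hconn : G.Connected)
    (ν : EuclideanSpace ℝ (Fin n)) (hν : ∀ i, 0 < ν i)
    (C : Finset (Fin n)) (hC : C.Nonempty) :
    eccS G C + 1 ≤ (evloc (G.adjMatrix ℝ) ν C).ncard := by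
  set T := Matrix.toEuclideanLin (G.adjMatrix ℝ)
  have hT : T.IsSymmetric := Matrix.isSymmetric_toEuclideanLin_iff.mpr (G.isHermitian_adjMatrix ℝ)
  -- `evloc` unfolds to `{μ | (eigenspace T μ).starProjection (rho ν C) ≠ 0}`.
  have hfin : (evloc (G.adjMatrix ℝ) ν C).Finite :=
    Module.End.finite_setOf_starProjection_eigenspace_ne_zero T (rho ν C)
  set p : ℝ[X] := ∏ μ ∈ hfin.toFinset, (X - Polynomial.C μ)
  have hp_monic : p.Monic := monic_prod_of_monic _ _ fun μ _ => monic_X_sub_C μ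
  have hp_deg : p.natDegree = (evloc (G.adjMatrix ℝ) ν C).ncard := by
    rw [natDegree_finsetProd_X_sub_C_eq_card, Set.ncard_eq_toFinset_card _ hfin]
  by_contra! hsmall
  obtain ⟨i, hi⟩ := hconn.exists_dSet_eq_of_le_eccS hC (Nat.le_of_lt_succ hsmall)
  have hpρ : aeval T p (rho ν C) = 0 := hT.aeval_apply_eq_zero_of_eval_eq_zero fun μ hμ =>
    by rw [eval_prod]; exact Finset.prod_eq_zero (hfin.mem_toFinset.mpr hμ) (by simp)
  have hlead := T.map_aeval_apply_eq_leadingCoeff_smul (EuclideanSpace.projₗ i) (rho ν C) p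
    fun m hm => SimpleGraph.adjMatrix_pow_apply_rho_eq_zero (by omega)
  rw [hpρ, map_zero, hp_monic.leadingCoeff, one_smul, hp_deg, ← hi] at hlead
  exact (hconn.adjMatrix_pow_dSet_apply_rho_pos hC hν i).ne hlead

theorem eccentricity_le_dual_degree {n : ℕ} (hn : 0 < n) (G : SimpleGraph (Fin n)) [DecidableRel G.Adj]
    (hconn : G.Connected)
    (ν : EuclideanSpace ℝ (Fin n)) (hν : ∀ i, 0 < ν i) (lam0 : ℝ)
    (hPerron : (G.adjMatrix ℝ).mulVec ν = lam0 • ν)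
    (C : Finset (Fin n)) (hC : C.Nonempty) :
    eccS G C + 1 ≤ (evloc (G.adjMatrix ℝ) ν C).ncard :=
  eccentricity_le_dual_degree_general G hconn ν hν C hC
end
end

section
/- Let C be a completely pseudo-regular code in a finite simple connected graph Γ, with antipodal set D = C_{ε_C}. Then the C-local and D-local spectra coincide: ev_C Γ = ev_D Γ. -/
/-!
Write `ε = eccS G C`, `ρS = rho ν S` and `E_μ = eigProj A μ`, so that
`E_μ (p(A) v) = p(μ) E_μ v`. The vectors `ρC_k = p_k(A) ρC`, `k ≤ ε`, have disjoint nonempty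
supports, so they are orthogonal and nonzero; they lie in the span of the `d + 1` vectors
`E_μ ρC`, `μ ∈ ev_C`, whence `ε ≤ d`. They sum to the Perron vector, so `Σ_{k ≤ ε} p_k`
vanishes on `ev_C \ {λ₀}` and `d ≤ ε`. For `ε = d` they form an orthogonal basis of that
span. If `p_d(μ) = 0` for some `μ ∈ ev_C`, then `E_μ ρC` is orthogonal to `ρC_d`, hence
equals `r(A) ρC` with `deg r < d`; but then `r` vanishes on the `d` points of `ev_C \ {μ}`, so
`r = 0`. Hence `E_μ ρD = p_d(μ) E_μ ρC` vanishes exactly when `E_μ ρC` does.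
-/

open Finset Polynomial BigOperators
open scoped Classical

noncomputable section

open scoped InnerProductSpace

section SpectralProjection

variable {n : ℕ} {A : Matrix (Fin n) (Fin n) ℝ}

lemma eigProj_eq_starProjection (μ : ℝ) (v : EuclideanSpace ℝ (Fin n)) :
    eigProj A μ v = (eigSp A μ).starProjection v := rfl

lemma eigProj_mem_eigSp (μ : ℝ) (v : EuclideanSpace ℝ (Fin n)) :
    eigProj A μ v ∈ eigSp A μ :=
  Submodule.starProjection_apply_mem _ v

lemma eigProj_add (μ : ℝ) (v w : EuclideanSpace ℝ (Fin n)) :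
    eigProj A μ (v + w) = eigProj A μ v + eigProj A μ w :=
  map_add (eigSp A μ).starProjection v w

lemma eigProj_smul (μ a : ℝ) (v : EuclideanSpace ℝ (Fin n)) :
    eigProj A μ (a • v) = a • eigProj A μ v :=
  map_smul (eigSp A μ).starProjection a v

lemma aevalVec_eq_toEuclideanLin (p : ℝ[X]) (v : EuclideanSpace ℝ (Fin n)) :
    aevalVec A p v = Matrix.toEuclideanLin (aeval A p) v := rfl

lemma aevalVec_zero (v : EuclideanSpace ℝ (Fin n)) : aevalVec A 0 v = 0 := by
  simp [aevalVec_eq_toEuclideanLin]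

lemma aevalVec_one (v : EuclideanSpace ℝ (Fin n)) : aevalVec A 1 v = v := by
  simp [aevalVec_eq_toEuclideanLin]

lemma aevalVec_add (p q : ℝ[X]) (v : EuclideanSpace ℝ (Fin n)) :
    aevalVec A (p + q) v = aevalVec A p v + aevalVec A q v := by
  simp only [aevalVec_eq_toEuclideanLin, map_add, LinearMap.add_apply]

lemma aevalVec_sum {ι : Type*} (s : Finset ι) (p : ι → ℝ[X])
    (v : EuclideanSpace ℝ (Fin n)) :
    aevalVec A (∑ i ∈ s, p i) v = ∑ i ∈ s, aevalVec A (p i) v := by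
  simp only [aevalVec_eq_toEuclideanLin, map_sum, LinearMap.sum_apply]

lemma aevalVec_C_mul (a : ℝ) (p : ℝ[X]) (v : EuclideanSpace ℝ (Fin n)) :
    aevalVec A (C a * p) v = a • aevalVec A p v := by
  simp only [aevalVec_eq_toEuclideanLin, map_mul, aeval_C, ← Algebra.smul_def, map_smul,
    LinearMap.smul_apply]

lemma aevalVec_X_mul (p : ℝ[X]) (v : EuclideanSpace ℝ (Fin n)) :
    aevalVec A (X * p) v = Matrix.toEuclideanLin A (aevalVec A p v) := by
  rw [aevalVec, aevalVec, map_mul, aeval_X, ← Matrix.mulVec_mulVec]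
  rfl

lemma isSymmetric_toEuclideanLin (hA : A.IsSymm) : (Matrix.toEuclideanLin A).IsSymmetric :=
  Matrix.isSymmetric_toEuclideanLin_iff.mpr (Matrix.isHermitian_iff_isSymm.mpr hA)

lemma eigProj_toEuclideanLin (hA : A.IsSymm) (μ : ℝ) (v : EuclideanSpace ℝ (Fin n)) :
    eigProj A μ (Matrix.toEuclideanLin A v) = μ • eigProj A μ v := by
  refine Submodule.eq_starProjection_of_mem_of_inner_eq_zero
    (Submodule.smul_mem _ μ (eigProj_mem_eigSp μ v)) fun w hw => ?_
  rw [inner_sub_left, isSymmetric_toEuclideanLin hA v w, Module.End.mem_eigenspace_iff.mp hw,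
    real_inner_smul_left, real_inner_smul_right, eigProj_eq_starProjection,
    Submodule.inner_starProjection_left_eq_right, Submodule.starProjection_eq_self_iff.mpr hw,
    sub_self]

lemma eigProj_aevalVec (hA : A.IsSymm) (μ : ℝ) (p : ℝ[X]) (v : EuclideanSpace ℝ (Fin n)) :
    eigProj A μ (aevalVec A p v) = p.eval μ • eigProj A μ v := by
  induction p using Polynomial.induction_on with
  | C a =>
    rw [← mul_one (C a), aevalVec_C_mul, aevalVec_one, eigProj_smul, eval_mul, eval_C, eval_one,
      mul_one]
  | add p q hp hq => rw [aevalVec_add, eigProj_add, hp, hq, eval_add, add_smul]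
  | monomial k a ih =>
    rw [pow_succ', mul_left_comm, aevalVec_X_mul, eigProj_toEuclideanLin hA, ih, smul_smul]
    simp only [eval_mul, eval_C, eval_X, eval_pow]

lemma eigProj_eq_zero_of_mem_eigSp (hA : A.IsSymm) {lam μ : ℝ} (h : lam ≠ μ)
    {u : EuclideanSpace ℝ (Fin n)} (hu : u ∈ eigSp A lam) : eigProj A μ u = 0 :=
  (Submodule.starProjection_apply_eq_zero_iff _).mpr
    ((isSymmetric_toEuclideanLin hA).orthogonalFamily_eigenspaces.isOrtho h hu)

lemma eigProj_eigProj_of_ne (hA : A.IsSymm) {lam μ : ℝ} (h : lam ≠ μ)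
    (v : EuclideanSpace ℝ (Fin n)) : eigProj A μ (eigProj A lam v) = 0 :=
  eigProj_eq_zero_of_mem_eigSp hA h (eigProj_mem_eigSp lam v)

lemma eigProj_eigProj (μ : ℝ) (v : EuclideanSpace ℝ (Fin n)) :
    eigProj A μ (eigProj A μ v) = eigProj A μ v :=
  Submodule.starProjection_eq_self_iff.mpr (eigProj_mem_eigSp μ v)

lemma eq_zero_of_forall_eigProj_eq_zero (hA : A.IsSymm) {v : EuclideanSpace ℝ (Fin n)}
    (h : ∀ μ, eigProj A μ v = 0) : v = 0 := by
  have hv : v ∈ (⨆ μ, eigSp A μ)ᗮ := by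
    rw [← Submodule.iInf_orthogonal, Submodule.mem_iInf]
    exact fun μ => (Submodule.starProjection_apply_eq_zero_iff _).mp (h μ)
  unfold eigSp at hv
  rwa [(isSymmetric_toEuclideanLin hA).orthogonalComplement_iSup_eigenspaces_eq_bot,
    Submodule.mem_bot] at hv

lemma sum_eigProj (hA : A.IsSymm) {S : Finset ℝ} {v : EuclideanSpace ℝ (Fin n)}
    (hS : ∀ μ, eigProj A μ v ≠ 0 → μ ∈ S) : ∑ μ ∈ S, eigProj A μ v = v := by
  refine sub_eq_zero.mp (eq_zero_of_forall_eigProj_eq_zero hA fun lam => ?_)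
  rw [eigProj_eq_starProjection, map_sub, map_sum]
  simp only [← eigProj_eq_starProjection]
  rw [sub_eq_zero, Finset.sum_eq_single lam (fun μ _ h => eigProj_eigProj_of_ne hA h v),
    eigProj_eigProj]
  intro hlam
  rw [eigProj_eigProj]
  exact not_not.mp (mt (hS lam) hlam)

lemma aevalVec_eq_sum_eigProj (hA : A.IsSymm) {S : Finset ℝ} {v : EuclideanSpace ℝ (Fin n)}
    (hS : ∀ μ, eigProj A μ v ≠ 0 → μ ∈ S) (p : ℝ[X]) :
    aevalVec A p v = ∑ μ ∈ S, p.eval μ • eigProj A μ v := by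
  have hpS : ∀ μ, eigProj A μ (aevalVec A p v) ≠ 0 → μ ∈ S := fun μ hμ =>
    hS μ (right_ne_zero_of_smul (eigProj_aevalVec hA μ p v ▸ hμ))
  conv_lhs => rw [← sum_eigProj hA hpS]
  simp only [eigProj_aevalVec hA]

lemma aevalVec_mem_span_eigProj (hA : A.IsSymm) {S : Finset ℝ} {v : EuclideanSpace ℝ (Fin n)}
    (hS : ∀ μ, eigProj A μ v ≠ 0 → μ ∈ S) (p : ℝ[X]) :
    aevalVec A p v ∈ Submodule.span ℝ (Set.range fun μ : S => eigProj A μ v) := by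
  rw [aevalVec_eq_sum_eigProj hA hS, ← Finset.sum_coe_sort]
  exact Submodule.sum_mem _ fun μ _ => Submodule.smul_mem _ _ (Submodule.subset_span ⟨μ, rfl⟩)

lemma span_aevalVec_le_span_eigProj (hA : A.IsSymm) {S : Finset ℝ}
    {v : EuclideanSpace ℝ (Fin n)} (hS : ∀ μ, eigProj A μ v ≠ 0 → μ ∈ S)
    {ι : Type*} (q : ι → ℝ[X]) :
    Submodule.span ℝ (Set.range fun i => aevalVec A (q i) v) ≤
      Submodule.span ℝ (Set.range fun μ : S => eigProj A μ v) :=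
  Submodule.span_le.mpr (Set.range_subset_iff.mpr fun i => aevalVec_mem_span_eigProj hA hS (q i))

lemma finrank_span_eigProj_le_card (S : Finset ℝ) (v : EuclideanSpace ℝ (Fin n)) :
    Module.finrank ℝ (Submodule.span ℝ (Set.range fun μ : S => eigProj A μ v)) ≤ S.card :=
  (finrank_range_le_card (R := ℝ) _).trans_eq (Fintype.card_coe S)

lemma card_le_of_pairwise_inner_aevalVec_eq_zero (hA : A.IsSymm) {S : Finset ℝ}
    {v : EuclideanSpace ℝ (Fin n)} (hS : ∀ μ, eigProj A μ v ≠ 0 → μ ∈ S)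
    {ι : Type*} [Fintype ι] (q : ι → ℝ[X]) (hne : ∀ i, aevalVec A (q i) v ≠ 0)
    (horth : Pairwise fun i j => ⟪aevalVec A (q i) v, aevalVec A (q j) v⟫_ℝ = 0) :
    Fintype.card ι ≤ S.card :=
  calc Fintype.card ι
      = Module.finrank ℝ (Submodule.span ℝ (Set.range fun i => aevalVec A (q i) v)) :=
        (finrank_span_eq_card (linearIndependent_of_ne_zero_of_inner_eq_zero hne horth)).symm
    _ ≤ Module.finrank ℝ (Submodule.span ℝ (Set.range fun μ : S => eigProj A μ v)) :=
        Submodule.finrank_mono (span_aevalVec_le_span_eigProj hA hS q)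
    _ ≤ S.card := finrank_span_eigProj_le_card S v

lemma span_aevalVec_eq_span_eigProj (hA : A.IsSymm) {S : Finset ℝ}
    {v : EuclideanSpace ℝ (Fin n)} (hS : ∀ μ, eigProj A μ v ≠ 0 → μ ∈ S)
    {ι : Type*} [Fintype ι] (q : ι → ℝ[X]) (hcard : S.card ≤ Fintype.card ι)
    (hne : ∀ i, aevalVec A (q i) v ≠ 0)
    (horth : Pairwise fun i j => ⟪aevalVec A (q i) v, aevalVec A (q j) v⟫_ℝ = 0) :
    Submodule.span ℝ (Set.range fun i => aevalVec A (q i) v) =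
      Submodule.span ℝ (Set.range fun μ : S => eigProj A μ v) := by
  refine Submodule.eq_of_le_of_finrank_le (span_aevalVec_le_span_eigProj hA hS q) ?_
  rw [finrank_span_eq_card (linearIndependent_of_ne_zero_of_inner_eq_zero hne horth)]
  exact (finrank_span_eigProj_le_card S v).trans hcard

lemma card_le_natDegree_add_one_of_aevalVec_mem_eigSp (hA : A.IsSymm) {S : Finset ℝ}
    {v : EuclideanSpace ℝ (Fin n)} (hS : ∀ μ ∈ S, eigProj A μ v ≠ 0)
    {q : ℝ[X]} {lam : ℝ}
    (hq : aevalVec A q v ∈ eigSp A lam) (hq0 : aevalVec A q v ≠ 0) :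
    S.card ≤ q.natDegree + 1 := by
  have hroots : ∀ μ ∈ S.erase lam, q.eval μ = 0 := fun μ hμ => by
    have h := eigProj_eq_zero_of_mem_eigSp hA (Finset.ne_of_mem_erase hμ).symm hq
    rw [eigProj_aevalVec hA] at h
    exact (smul_eq_zero.mp h).resolve_right (hS μ (Finset.mem_of_mem_erase hμ))
  by_contra! hlt
  have hdeg : q.degree < (S.erase lam).card := by
    have := Finset.pred_card_le_card_erase (s := S) (a := lam)
    exact degree_le_natDegree.trans_lt (by exact_mod_cast (by omega : q.natDegree < _))
  exact hq0 (by rw [eq_zero_of_degree_lt_of_eval_finset_eq_zero _ hdeg hroots, aevalVec_zero])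

lemma inner_sum_smul_of_pairwise_inner_eq_zero {E : Type*} [NormedAddCommGroup E]
    [InnerProductSpace ℝ E] {ι : Type*} [Fintype ι] {u : ι → E}
    (horth : Pairwise fun i j => ⟪u i, u j⟫_ℝ = 0) (c : ι → ℝ) (j : ι) :
    ⟪u j, ∑ i, c i • u i⟫_ℝ = c j * ‖u j‖ ^ 2 := by
  rw [inner_sum, Finset.sum_eq_single j (fun i _ hij => by rw [real_inner_smul_right,
    horth hij.symm, mul_zero]) (fun h => absurd (Finset.mem_univ j) h), real_inner_smul_right,
    real_inner_self_eq_norm_sq]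

theorem eval_last_ne_zero_of_pairwise_inner_aevalVec_eq_zero (hA : A.IsSymm) {S : Finset ℝ}
    {v : EuclideanSpace ℝ (Fin n)} (hS : ∀ μ, μ ∈ S ↔ eigProj A μ v ≠ 0) {d : ℕ}
    (hcard : S.card = d + 1) (q : Fin (d + 1) → ℝ[X]) (hdeg : ∀ i, (q i).natDegree ≤ i)
    (hne : ∀ i, aevalVec A (q i) v ≠ 0)
    (horth : Pairwise fun i j => ⟪aevalVec A (q i) v, aevalVec A (q j) v⟫_ℝ = 0)
    {μ : ℝ} (hμ : μ ∈ S) : (q (Fin.last d)).eval μ ≠ 0 := by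
  intro hzero
  obtain ⟨c, hc⟩ :
      ∃ c : Fin (d + 1) → ℝ, ∑ i, c i • aevalVec A (q i) v = eigProj A μ v := by
    rw [← Submodule.mem_span_range_iff_exists_fun, span_aevalVec_eq_span_eigProj hA
      (fun μ => (hS μ).mpr) q (by simp [hcard]) hne horth]
    exact Submodule.subset_span ⟨⟨μ, hμ⟩, rfl⟩
  have hlast : c (Fin.last d) = 0 := by
    have h := inner_sum_smul_of_pairwise_inner_eq_zero horth c (Fin.last d)
    rw [hc, eigProj_eq_starProjection, ← Submodule.inner_starProjection_left_eq_right,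
      ← eigProj_eq_starProjection, eigProj_aevalVec hA, hzero, zero_smul, inner_zero_left] at h
    exact (mul_eq_zero.mp h.symm).resolve_right (pow_ne_zero 2 (norm_ne_zero_iff.mpr (hne _)))
  set r : ℝ[X] := ∑ i, C (c i) * q i
  have hr : aevalVec A r v = eigProj A μ v := by
    simp only [r, aevalVec_sum, aevalVec_C_mul, hc]
  have hr_deg : r.degree < d := by
    rw [← mem_degreeLT]
    refine Submodule.sum_mem _ fun i _ => ?_
    rcases eq_or_ne i (Fin.last d) with rfl | hi
    · simp [hlast]
    · rw [mem_degreeLT]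
      refine degree_le_natDegree.trans_lt ?_
      exact_mod_cast ((natDegree_C_mul_le _ _).trans (hdeg i)).trans_lt (Fin.val_lt_last hi)
  have hr_roots : ∀ lam ∈ S.erase μ, r.eval lam = 0 := fun lam hlam => by
    have h := congrArg (eigProj A lam) hr
    rw [eigProj_aevalVec hA, eigProj_eigProj_of_ne hA (Finset.ne_of_mem_erase hlam).symm] at h
    exact (smul_eq_zero.mp h).resolve_right ((hS lam).mp (Finset.mem_of_mem_erase hlam))
  have hr0 : r = 0 := eq_zero_of_degree_lt_of_eval_finset_eq_zero (S.erase μ)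
    (by rwa [Finset.card_erase_of_mem hμ, hcard, Nat.add_sub_cancel]) hr_roots
  exact (hS μ).mp hμ (by rw [← hr, hr0, aevalVec_zero])

end SpectralProjection

section Subconstituents

variable {n : ℕ} {G : SimpleGraph (Fin n)} {C : Finset (Fin n)}

lemma exists_mem_dist_eq_dSet (hC : C.Nonempty) (i : Fin n) :
    ∃ j ∈ C, G.dist i j = dSet G C i := by
  obtain ⟨j, hj⟩ := hC
  exact Nat.sInf_mem (⟨_, j, hj, rfl⟩ : {k | ∃ j ∈ C, G.dist i j = k}.Nonempty)

lemma dSet_le_dist {j : Fin n} (hj : j ∈ C) (i : Fin n) : dSet G C i ≤ G.dist i j :=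
  Nat.sInf_le ⟨j, hj, rfl⟩

lemma dSet_le_eccS (i : Fin n) : dSet G C i ≤ eccS G C :=
  Finset.le_sup (Finset.mem_univ i)

lemma dSet_le_dSet_add_one_of_adj (hconn : G.Connected) (hC : C.Nonempty) {u v : Fin n}
    (h : G.Adj u v) : dSet G C u ≤ dSet G C v + 1 := by
  obtain ⟨j, hj, hdist⟩ := exists_mem_dist_eq_dSet (G := G) hC v
  calc dSet G C u ≤ G.dist u j := dSet_le_dist hj u
    _ ≤ G.dist u v + G.dist v j := hconn.dist_triangle
    _ = dSet G C v + 1 := by rw [hdist, SimpleGraph.dist_eq_one_iff_adj.mpr h, add_comm]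

lemma exists_dSet_eq_of_dSet_eq_succ (hconn : G.Connected) (hC : C.Nonempty) {i : Fin n}
    {m : ℕ} (h : dSet G C i = m + 1) : ∃ u, dSet G C u = m := by
  obtain ⟨j, hj, hdist⟩ := exists_mem_dist_eq_dSet (G := G) hC i
  obtain ⟨w, hw⟩ := hconn.exists_walk_length_eq_dist i j
  cases w with
  | nil => rw [SimpleGraph.dist_self, h] at hdist; omega
  | @cons _ u _ hadj w =>
    refine ⟨u, le_antisymm ?_ (by have := dSet_le_dSet_add_one_of_adj hconn hC hadj; omega)⟩
    calc dSet G C u ≤ G.dist u j := dSet_le_dist hj u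
      _ ≤ w.length := SimpleGraph.dist_le w
      _ = m := by rw [SimpleGraph.Walk.length_cons] at hw; omega

lemma exists_dSet_eq_of_le (hconn : G.Connected) (hC : C.Nonempty) {i : Fin n} {k : ℕ}
    (hk : k ≤ dSet G C i) : ∃ u, dSet G C u = k := by
  obtain ⟨m, hm⟩ := Nat.exists_eq_add_of_le hk
  clear hk
  induction m generalizing i with
  | zero => exact ⟨i, hm⟩
  | succ m ih =>
    obtain ⟨u, hu⟩ := exists_dSet_eq_of_dSet_eq_succ hconn hC hm
    exact ih hu

lemma subcons_nonempty (hconn : G.Connected) (hC : C.Nonempty) {k : ℕ} (hk : k ≤ eccS G C) :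
    (subcons G C k).Nonempty := by
  obtain ⟨i, -, hi⟩ := Finset.exists_mem_eq_sup _ (hC.mono (Finset.subset_univ C)) (dSet G C)
  obtain ⟨u, hu⟩ := exists_dSet_eq_of_le hconn hC (hk.trans_eq hi)
  exact ⟨u, by simp [subcons, hu]⟩

lemma disjoint_subcons {k h : ℕ} (hkh : k ≠ h) : Disjoint (subcons G C k) (subcons G C h) :=
  Finset.disjoint_filter.mpr fun _ _ hk hh => hkh (hk.symm.trans hh)

end Subconstituents

section WeightedCharacteristicVector

variable {n : ℕ}

lemma rho_ne_zero {ν : EuclideanSpace ℝ (Fin n)} (hν : ∀ i, 0 < ν i) {S : Finset (Fin n)} (hS : S.Nonempty) :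
    rho ν S ≠ 0 := by
  obtain ⟨i, hi⟩ := hS
  intro h
  have hi0 : rho ν S i = 0 := by rw [h]; rfl
  simp only [rho, PiLp.toLp_apply, hi, if_true] at hi0
  exact (hν i).ne' hi0

lemma inner_rho_eq_zero_of_disjoint (ν : EuclideanSpace ℝ (Fin n)) {S T : Finset (Fin n)}
    (h : Disjoint S T) : ⟪rho ν S, rho ν T⟫_ℝ = 0 := by
  rw [PiLp.inner_apply]
  refine Finset.sum_eq_zero fun i _ => ?_
  by_cases hS : i ∈ S
  · simp [rho, Finset.disjoint_left.mp h hS]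
  · simp [rho, hS]

lemma sum_rho_subcons (G : SimpleGraph (Fin n)) (C : Finset (Fin n))
    (ν : EuclideanSpace ℝ (Fin n)) :
    ∑ k ∈ Finset.range (eccS G C + 1), rho ν (subcons G C k) = ν := by
  ext i
  simp only [WithLp.ofLp_sum, Finset.sum_apply, rho, subcons, Finset.mem_filter,
    Finset.mem_univ, true_and, Finset.sum_ite_eq, Finset.mem_range]
  simp [Nat.lt_succ_of_le (dSet_le_eccS i)]

end WeightedCharacteristicVector

section PseudoRegularCode

/-- In the paper the `p k` are the `C`-local predistance polynomials. -/
def IsCompletelyPseudoRegular {n : ℕ} (G : SimpleGraph (Fin n)) [DecidableRel G.Adj]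
    (ν : EuclideanSpace ℝ (Fin n)) (C : Finset (Fin n)) (p : ℕ → ℝ[X]) : Prop :=
  ∀ k ≤ eccS G C, rho ν (subcons G C k) = aevalVec (G.adjMatrix ℝ) (p k) (rho ν C)

variable {n : ℕ} {G : SimpleGraph (Fin n)} [DecidableRel G.Adj] {ν : EuclideanSpace ℝ (Fin n)}
  {C : Finset (Fin n)} {p : ℕ → ℝ[X]}

lemma aevalVec_rho_ne_zero (hconn : G.Connected) (hν : ∀ i, 0 < ν i) (hC : C.Nonempty)
    (hcode : IsCompletelyPseudoRegular G ν C p)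
    {k : ℕ} (hk : k ≤ eccS G C) : aevalVec (G.adjMatrix ℝ) (p k) (rho ν C) ≠ 0 :=
  hcode k hk ▸ rho_ne_zero hν (subcons_nonempty hconn hC hk)

lemma pairwise_inner_aevalVec_rho_eq_zero
    (hcode : IsCompletelyPseudoRegular G ν C p) :
    Pairwise fun k h : Fin (eccS G C + 1) => ⟪aevalVec (G.adjMatrix ℝ) (p k) (rho ν C),
      aevalVec (G.adjMatrix ℝ) (p h) (rho ν C)⟫_ℝ = 0 :=
  fun k h hkh => by
    dsimp only
    rw [← hcode k k.is_le, ← hcode h h.is_le]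
    exact inner_rho_eq_zero_of_disjoint ν (disjoint_subcons (Fin.val_ne_of_ne hkh))

lemma eccS_add_one_le_card (hconn : G.Connected) (hν : ∀ i, 0 < ν i) (hC : C.Nonempty)
    (hcode : IsCompletelyPseudoRegular G ν C p)
    {S : Finset ℝ} (hS : ∀ μ, eigProj (G.adjMatrix ℝ) μ (rho ν C) ≠ 0 → μ ∈ S) :
    eccS G C + 1 ≤ S.card := by
  simpa using card_le_of_pairwise_inner_aevalVec_eq_zero G.isSymm_adjMatrix hS
    (fun k : Fin (eccS G C + 1) => p k) (fun k => aevalVec_rho_ne_zero hconn hν hC hcode k.is_le)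
    (pairwise_inner_aevalVec_rho_eq_zero hcode)

lemma card_le_eccS_add_one (hν : ∀ i, 0 < ν i) (hC : C.Nonempty) {lam0 : ℝ}
    (hPerron : (G.adjMatrix ℝ).mulVec ν = lam0 • ν)
    (hdeg : ∀ k ≤ eccS G C, (p k).natDegree ≤ k)
    (hcode : IsCompletelyPseudoRegular G ν C p)
    {S : Finset ℝ} (hS : ∀ μ ∈ S, eigProj (G.adjMatrix ℝ) μ (rho ν C) ≠ 0) :
    S.card ≤ eccS G C + 1 := by
  have hsum :
      aevalVec (G.adjMatrix ℝ) (∑ k ∈ Finset.range (eccS G C + 1), p k) (rho ν C) = ν := by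
    conv_rhs => rw [← sum_rho_subcons G C ν]
    rw [aevalVec_sum]
    exact Finset.sum_congr rfl fun k hk =>
      (hcode k (Nat.lt_succ_iff.mp (Finset.mem_range.mp hk))).symm
  have hν_mem : ν ∈ eigSp (G.adjMatrix ℝ) lam0 :=
    Module.End.mem_eigenspace_iff.mpr (congrArg (WithLp.toLp 2) hPerron)
  have hν_ne : ν ≠ 0 := by
    obtain ⟨i, -⟩ := hC
    exact fun h => (hν i).ne' (by rw [h]; rfl)
  refine (card_le_natDegree_add_one_of_aevalVec_mem_eigSp G.isSymm_adjMatrix hS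
    (by rwa [hsum]) (by rwa [hsum])).trans (Nat.add_le_add_right ?_ 1)
  refine natDegree_sum_le_of_forall_le _ _ fun k hk => ?_
  have hk' := Nat.lt_succ_iff.mp (Finset.mem_range.mp hk)
  exact (hdeg k hk').trans hk'

lemma eval_eccS_ne_zero (hconn : G.Connected) (hν : ∀ i, 0 < ν i) (hC : C.Nonempty)
    (hdeg : ∀ k ≤ eccS G C, (p k).natDegree ≤ k)
    (hcode : IsCompletelyPseudoRegular G ν C p)
    {S : Finset ℝ} (hS : ∀ μ, μ ∈ S ↔ eigProj (G.adjMatrix ℝ) μ (rho ν C) ≠ 0)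
    (hcard : S.card = eccS G C + 1) {μ : ℝ} (hμ : μ ∈ S) : (p (eccS G C)).eval μ ≠ 0 :=
  eval_last_ne_zero_of_pairwise_inner_aevalVec_eq_zero G.isSymm_adjMatrix hS hcard
    (fun k => p k) (fun k => hdeg k k.is_le)
    (fun k => aevalVec_rho_ne_zero hconn hν hC hcode k.is_le)
    (pairwise_inner_aevalVec_rho_eq_zero hcode) hμ

end PseudoRegularCode

theorem code_local_spectra_coincide_general {n : ℕ} (G : SimpleGraph (Fin n)) [DecidableRel G.Adj]
    (hconn : G.Connected)
    (ν : EuclideanSpace ℝ (Fin n)) (hν : ∀ i, 0 < ν i) (lam0 : ℝ)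
    (hPerron : (G.adjMatrix ℝ).mulVec ν = lam0 • ν)
    (C : Finset (Fin n)) (hC : C.Nonempty)
    (d : ℕ) (hd : d + 1 = (evloc (G.adjMatrix ℝ) ν C).ncard)
    (p : ℕ → Polynomial ℝ)
    (hdeg : ∀ k ≤ d, (p k).natDegree = k)
    (hcode : ∀ k ≤ eccS G C, rho ν (subcons G C k) = aevalVec (G.adjMatrix ℝ) (p k) (rho ν C)) :
    evloc (G.adjMatrix ℝ) ν C = evloc (G.adjMatrix ℝ) ν (subcons G C (eccS G C)) := by
  have hfin : (evloc (G.adjMatrix ℝ) ν C).Finite := Set.finite_of_ncard_ne_zero (by omega)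
  have hS : ∀ μ, μ ∈ hfin.toFinset ↔ eigProj (G.adjMatrix ℝ) μ (rho ν C) ≠ 0 :=
    fun μ => hfin.mem_toFinset
  have hcard : hfin.toFinset.card = d + 1 := by rw [hd, Set.ncard_eq_toFinset_card _ hfin]
  have hε_le : eccS G C ≤ d := by
    have := eccS_add_one_le_card hconn hν hC hcode fun μ => (hS μ).mpr
    omega
  have hdeg' : ∀ k ≤ eccS G C, (p k).natDegree ≤ k := fun k hk =>
    (hdeg k (hk.trans hε_le)).le
  have hε : hfin.toFinset.card = eccS G C + 1 :=
    le_antisymm (card_le_eccS_add_one hν hC hPerron hdeg' hcode fun μ => (hS μ).mp)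
      (eccS_add_one_le_card hconn hν hC hcode fun μ => (hS μ).mpr)
  ext μ
  simp only [evloc, Set.mem_ofPred_eq, hcode _ le_rfl, eigProj_aevalVec G.isSymm_adjMatrix]
  exact ⟨fun h => smul_ne_zero
    (eval_eccS_ne_zero hconn hν hC hdeg' hcode hS hε ((hS μ).mpr h)) h, right_ne_zero_of_smul⟩

theorem code_local_spectra_coincide {n : ℕ} (hn : 0 < n) (G : SimpleGraph (Fin n)) [DecidableRel G.Adj]
    (hconn : G.Connected)
    (ν : EuclideanSpace ℝ (Fin n)) (hν : ∀ i, 0 < ν i) (lam0 : ℝ)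
    (hPerron : (G.adjMatrix ℝ).mulVec ν = lam0 • ν)
    (C : Finset (Fin n)) (hC : C.Nonempty)
    (d : ℕ) (hd : d + 1 = (evloc (G.adjMatrix ℝ) ν C).ncard)
    (p : ℕ → Polynomial ℝ)
    (hdeg : ∀ k ≤ d, (p k).natDegree = k)
    (horth : ∀ k ≤ d, ∀ h ≤ d, k ≠ h →
      (inner ℝ (aevalVec (G.adjMatrix ℝ) (p k) (unitVec ν C))
             (aevalVec (G.adjMatrix ℝ) (p h) (unitVec ν C)) : ℝ) = 0)
    (hnorm : ∀ k ≤ d,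
      (inner ℝ (aevalVec (G.adjMatrix ℝ) (p k) (unitVec ν C))
             (aevalVec (G.adjMatrix ℝ) (p k) (unitVec ν C)) : ℝ) = (p k).eval lam0)
    (hcode : ∀ k ≤ eccS G C, rho ν (subcons G C k) = aevalVec (G.adjMatrix ℝ) (p k) (rho ν C)) :
    evloc (G.adjMatrix ℝ) ν C = evloc (G.adjMatrix ℝ) ν (subcons G C (eccS G C)) :=
  code_local_spectra_coincide_general G hconn ν hν lam0 hPerron C hC d hd p hdeg hcode
end
end

section
/- Let C be a completely pseudo-regular code in a finite simple connected graph Γ with antipodal set D, which is also a completely pseudo-regular code with C as its antipodal set. If p_{d_C} is the C-local predistance polynomial of maximum degree and p̄ the D-local predistance polynomial of maximum degree, then p̄(μ_l) = 1/p_{d_C}(μ_l) for every μ_l in the C-local spectrum. -/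
open Finset Polynomial BigOperators
open scoped Classical

noncomputable section

/-!
The code equations at maximal distance give `ρD = p_d(A) ρC` and `ρC = p̄(A) ρD`, hence
`ρC = (p̄ p_d)(A) ρC`. For a symmetric operator the orthogonal projection onto the `μ`-eigenspace
turns `r(A)` into multiplication by `r(μ)`, so projecting onto the `μ_l`-eigenspace, which sees `ρC`
because `μ_l` lies in the `C`-local spectrum, yields `p̄(μ_l) p_d(μ_l) = 1`.
-/

section Eigenspace

open Module.End

variable {𝕜 E : Type*} [RCLike 𝕜] [NormedAddCommGroup E] [InnerProductSpace 𝕜 E]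
  {T : E →ₗ[𝕜] E} {μ : 𝕜} [(eigenspace T μ).HasOrthogonalProjection]

theorem LinearMap.IsSymmetric.starProjection_eigenspace_apply (hT : T.IsSymmetric) (v : E) :
    (eigenspace T μ).starProjection (T v) = μ • (eigenspace T μ).starProjection v := by
  set P := (eigenspace T μ).starProjection
  have hPv : T (P v) = μ • P v := mem_eigenspace_iff.mp (Submodule.starProjection_apply_mem _ v)
  refine Submodule.eq_starProjection_of_mem_orthogonal
    (Submodule.smul_mem _ μ (Submodule.starProjection_apply_mem _ v)) ?_
  rw [← hPv, ← map_sub]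
  exact hT.invariant_orthogonalComplement_eigenspace μ _
    (Submodule.sub_starProjection_mem_orthogonal v)

theorem LinearMap.IsSymmetric.starProjection_eigenspace_aeval (hT : T.IsSymmetric)
    (r : 𝕜[X]) (v : E) :
    (eigenspace T μ).starProjection (aeval T r v) = r.eval μ • (eigenspace T μ).starProjection v := by
  induction r using Polynomial.induction_on generalizing v with
  | C a => simp [Algebra.algebraMap_eq_smul_one]
  | add f g hf hg => simp only [map_add, LinearMap.add_apply, hf, hg, eval_add, add_smul]
  | monomial k a ih =>
    rw [pow_succ, ← mul_assoc, map_mul, Module.End.mul_apply, ih, aeval_X,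
      hT.starProjection_eigenspace_apply, smul_smul, eval_mul (p := C a * X ^ k), eval_X]

theorem LinearMap.IsSymmetric.eval_eq_one_of_aeval_apply_eq_self (hT : T.IsSymmetric)
    {r : 𝕜[X]} {v : E} (hr : aeval T r v = v) (hv : (eigenspace T μ).starProjection v ≠ 0) :
    r.eval μ = 1 :=
  smul_left_injective 𝕜 hv <| by
    simp only [← hT.starProjection_eigenspace_aeval, hr, one_smul]

end Eigenspace

theorem aevalVec_eq_aeval_toEuclideanLin {n : ℕ} (A : Matrix (Fin n) (Fin n) ℝ)
    (r : ℝ[X]) (v : EuclideanSpace ℝ (Fin n)) :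
    aevalVec A r v = aeval (Matrix.toEuclideanLin A) r v := by
  -- `toEuclideanLin` is, definitionally, the algebra equivalence for the standard basis
  rw [show Matrix.toEuclideanLin A = Matrix.toLinAlgEquiv (PiLp.basisFun 2 ℝ (Fin n)) A from rfl,
    aeval_algHom_apply]
  rfl

theorem aevalVec_mul {n : ℕ} (A : Matrix (Fin n) (Fin n) ℝ) (r s : ℝ[X])
    (v : EuclideanSpace ℝ (Fin n)) :
    aevalVec A (r * s) v = aevalVec A r (aevalVec A s v) := by
  simp only [aevalVec_eq_aeval_toEuclideanLin, map_mul, Module.End.mul_apply]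

theorem eval_eq_one_of_aevalVec_eq_self {n : ℕ} {A : Matrix (Fin n) (Fin n) ℝ}
    (hA : A.IsHermitian) {r : ℝ[X]} {v : EuclideanSpace ℝ (Fin n)} {μ : ℝ}
    (hr : aevalVec A r v = v) (hv : eigProj A μ v ≠ 0) : r.eval μ = 1 :=
  (Matrix.isSymmetric_toEuclideanLin_iff.mpr hA).eval_eq_one_of_aeval_apply_eq_self
    (by rwa [← aevalVec_eq_aeval_toEuclideanLin]) hv

theorem reciprocal_predistance_polynomials_general {n : ℕ} (G : SimpleGraph (Fin n)) [DecidableRel G.Adj]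
    (ν : EuclideanSpace ℝ (Fin n))
    (C : Finset (Fin n))
    (d : ℕ)
    (p : ℕ → Polynomial ℝ)
    (hcode : ∀ k ≤ eccS G C, rho ν (subcons G C k) = aevalVec (G.adjMatrix ℝ) (p k) (rho ν C))
    (μ : Fin (d + 1) → ℝ)
    (hμr : Set.range μ = evloc (G.adjMatrix ℝ) ν C)
    (hext : eccS G C = d)
    (q : ℕ → Polynomial ℝ)
    (hqcode : ∀ k ≤ eccS G (subcons G C (eccS G C)),
      rho ν (subcons G (subcons G C (eccS G C)) k) = aevalVec (G.adjMatrix ℝ) (q k) (rho ν (subcons G C (eccS G C))))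
    (hDecc : eccS G (subcons G C (eccS G C)) = d)
    (hDanti : subcons G (subcons G C (eccS G C)) (eccS G (subcons G C (eccS G C))) = C) :
    ∀ l : Fin (d + 1), (q d).eval (μ l) = ((p d).eval (μ l))⁻¹ := by
  intro l
  have hρD : rho ν (subcons G C d) = aevalVec (G.adjMatrix ℝ) (p d) (rho ν C) :=
    hext ▸ hcode _ le_rfl
  have hρC : rho ν C = aevalVec (G.adjMatrix ℝ) (q d) (rho ν (subcons G C d)) := by
    have h := hqcode _ le_rfl
    rwa [hDanti, hDecc, hext] at h
  have hloop : aevalVec (G.adjMatrix ℝ) (q d * p d) (rho ν C) = rho ν C := by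
    rw [aevalVec_mul, ← hρD, ← hρC]
  have hl : eigProj (G.adjMatrix ℝ) (μ l) (rho ν C) ≠ 0 := by
    change μ l ∈ evloc _ ν C
    exact hμr ▸ Set.mem_range_self l
  have hone := eval_eq_one_of_aevalVec_eq_self (G.isHermitian_adjMatrix ℝ) hloop hl
  rw [eval_mul] at hone
  exact eq_inv_of_mul_eq_one_left hone

theorem reciprocal_predistance_polynomials {n : ℕ} (hn : 0 < n) (G : SimpleGraph (Fin n)) [DecidableRel G.Adj]
    (hconn : G.Connected)
    (ν : EuclideanSpace ℝ (Fin n)) (hν : ∀ i, 0 < ν i) (lam0 : ℝ)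
    (hPerron : (G.adjMatrix ℝ).mulVec ν = lam0 • ν)
    (C : Finset (Fin n)) (hC : C.Nonempty)
    (d : ℕ) (hd : d + 1 = (evloc (G.adjMatrix ℝ) ν C).ncard)
    (p : ℕ → Polynomial ℝ)
    (hdeg : ∀ k ≤ d, (p k).natDegree = k)
    (horth : ∀ k ≤ d, ∀ h ≤ d, k ≠ h →
      (inner ℝ (aevalVec (G.adjMatrix ℝ) (p k) (unitVec ν C))
             (aevalVec (G.adjMatrix ℝ) (p h) (unitVec ν C)) : ℝ) = 0)
    (hnorm : ∀ k ≤ d,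
      (inner ℝ (aevalVec (G.adjMatrix ℝ) (p k) (unitVec ν C))
             (aevalVec (G.adjMatrix ℝ) (p k) (unitVec ν C)) : ℝ) = (p k).eval lam0)
    (hcode : ∀ k ≤ eccS G C, rho ν (subcons G C k) = aevalVec (G.adjMatrix ℝ) (p k) (rho ν C))
    (μ : Fin (d + 1) → ℝ) (hμa : StrictAnti μ)
    (hμr : Set.range μ = evloc (G.adjMatrix ℝ) ν C)
    (hext : eccS G C = d)
    (q : ℕ → Polynomial ℝ)
    (hqdeg : ∀ k ≤ d, (q k).natDegree = k)
    (hqorth : ∀ k ≤ d, ∀ h ≤ d, k ≠ h →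
      (inner ℝ (aevalVec (G.adjMatrix ℝ) (q k) (unitVec ν (subcons G C (eccS G C))))
             (aevalVec (G.adjMatrix ℝ) (q h) (unitVec ν (subcons G C (eccS G C)))) : ℝ) = 0)
    (hqnorm : ∀ k ≤ d,
      (inner ℝ (aevalVec (G.adjMatrix ℝ) (q k) (unitVec ν (subcons G C (eccS G C))))
             (aevalVec (G.adjMatrix ℝ) (q k) (unitVec ν (subcons G C (eccS G C)))) : ℝ) = (q k).eval lam0)
    (hqcode : ∀ k ≤ eccS G (subcons G C (eccS G C)),
      rho ν (subcons G (subcons G C (eccS G C)) k) = aevalVec (G.adjMatrix ℝ) (q k) (rho ν (subcons G C (eccS G C))))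
    (hDecc : eccS G (subcons G C (eccS G C)) = d)
    (hDanti : subcons G (subcons G C (eccS G C)) (eccS G (subcons G C (eccS G C))) = C) :
    ∀ l : Fin (d + 1), (q d).eval (μ l) = ((p d).eval (μ l))⁻¹ :=
  reciprocal_predistance_polynomials_general G ν C d p hcode μ hμr hext q hqcode hDecc hDanti
end
end
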